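/- The boundary value problem u'''(t) = -e^{u(t)} - e^{u'(t)} on (0,1) with u(0)=u'(0)=u'(1)=0 has a unique monotone (nondecreasing) nonnegative solution u satisfying 0 ≤ u(t) ≤ 0.2250, 0 ≤ u'(t) ≤ 0.3375, |u''(t)| ≤ 1.350 on [0,1]. -/

import Mathlib

/-- `u` solves `u''' = -e^u - e^{u'}` on `(0,1)` with `u(0)=u'(0)=u'(1)=0`. -/
def IsSolution (u : ℝ → ℝ) : Prop :=
  ContDiff ℝ 2 u ∧
  (∀ t ∈ Set.Ioo (0:ℝ) 1,
    HasDerivAt (deriv (deriv u)) (-Real.exp (u t) - Real.exp (deriv u t)) t) ∧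
  u 0 = 0 ∧ deriv u 0 = 0 ∧ deriv u 1 = 0

/-- bounds of the example. -/
def InBounds (u : ℝ → ℝ) : Prop :=
  ∀ t ∈ Set.Icc (0:ℝ) 1,
    u t ∈ Set.Icc 0 ((0.2250 : ℝ)) ∧ deriv u t ∈ Set.Icc 0 ((0.3375 : ℝ)) ∧ |deriv (deriv u) t| ≤ (1.350 : ℝ)


/-!
Write `G φ` for the solution of the linear problem `u''' = φ`, `u(0) = u'(0) = u'(1) = 0`, obtained
by integrating three times. If `|φ| ≤ M`, the functions `M s²/2 ∓ u'` are convex; comparing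
them with their chords and tangents gives `|u| ≤ M/12`, `|u'| ≤ M/8`, `|u''| ≤ M/2`, and `φ ≤ 0`
gives `u' ≥ 0`.

On the box `[0, 0.225] × [0, 0.3375]` the nonlinearity `f(x, y) = -eˣ - eʸ` is negative, bounded
by `e^0.225 + e^0.3375 ≤ M = 2.7` and `M`-Lipschitz for the max metric. Since `M/12 = 0.225` and
`M/8 = 0.3375`, the map `(u, u') ↦ (G φ, (G φ)')` with `φ = f(u, u')` sends box-valued continuous
pairs on `[0, 1]` to box-valued pairs and contracts with factor `M/8 < 1`. Its fixed point is the
solution, and any solution within the bounds is a fixed point, hence equal to it.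
-/

open Set Real MeasureTheory intervalIntegral

lemma ConvexOn.add_mul_sub_le_of_hasDerivAt {S : Set ℝ} {f : ℝ → ℝ} {f' x y : ℝ}
    (hf : ConvexOn ℝ S f) (hx : x ∈ S) (hy : y ∈ S) (hd : HasDerivAt f f' x) :
    f x + f' * (y - x) ≤ f y := by
  rcases lt_trichotomy x y with hxy | rfl | hxy
  · have := hf.le_slope_of_hasDerivAt hx hy hxy hd
    rw [slope_def_field, le_div_iff₀ (sub_pos.2 hxy)] at this
    linarith
  · simp
  · have := hf.slope_le_of_hasDerivAt hy hx hxy hd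
    rw [slope_def_field, div_le_iff₀ (sub_pos.2 hxy)] at this
    linarith

lemma nonneg_of_abs_le_on_Ioo {φ : ℝ → ℝ} {M : ℝ} (hM : ∀ t ∈ Ioo (0:ℝ) 1, |φ t| ≤ M) :
    0 ≤ M :=
  (abs_nonneg _).trans (hM (1 / 2) ⟨by norm_num, by norm_num⟩)

/-- `(u, v, w)` stands for `(u, u', u'')`, where `u''' = φ` on `(0, 1)` and
`u(0) = u'(0) = u'(1) = 0`. -/
structure IsBVPSolution (φ u v w : ℝ → ℝ) : Prop where
  hasDerivAt_u : ∀ t, HasDerivAt u (v t) t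
  hasDerivAt_v : ∀ t, HasDerivAt v (w t) t
  hasDerivAt_w : ∀ t ∈ Ioo (0:ℝ) 1, HasDerivAt w (φ t) t
  u_zero : u 0 = 0
  v_zero : v 0 = 0
  v_one : v 1 = 0

namespace IsBVPSolution

variable {φ ψ u v w u' v' w' : ℝ → ℝ} {M t : ℝ}

lemma deriv_u (h : IsBVPSolution φ u v w) : deriv u = v :=
  funext fun t => (h.hasDerivAt_u t).deriv

lemma deriv_v (h : IsBVPSolution φ u v w) : deriv v = w :=
  funext fun t => (h.hasDerivAt_v t).deriv

lemma neg (h : IsBVPSolution φ u v w) : IsBVPSolution (-φ) (-u) (-v) (-w) where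
  hasDerivAt_u t := (h.hasDerivAt_u t).neg
  hasDerivAt_v t := (h.hasDerivAt_v t).neg
  hasDerivAt_w t ht := (h.hasDerivAt_w t ht).neg
  u_zero := by simp [h.u_zero]
  v_zero := by simp [h.v_zero]
  v_one := by simp [h.v_one]

lemma sub (h : IsBVPSolution φ u v w) (h' : IsBVPSolution ψ u' v' w') :
    IsBVPSolution (φ - ψ) (u - u') (v - v') (w - w') where
  hasDerivAt_u t := (h.hasDerivAt_u t).sub (h'.hasDerivAt_u t)
  hasDerivAt_v t := (h.hasDerivAt_v t).sub (h'.hasDerivAt_v t)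
  hasDerivAt_w t ht := (h.hasDerivAt_w t ht).sub (h'.hasDerivAt_w t ht)
  u_zero := by simp [h.u_zero, h'.u_zero]
  v_zero := by simp [h.v_zero, h'.v_zero]
  v_one := by simp [h.v_one, h'.v_one]

lemma hasDerivAt_mul_sq_sub (h : IsBVPSolution φ u v w) (M s : ℝ) :
    HasDerivAt (fun s => M * s ^ 2 / 2 - v s) (M * s - w s) s :=
  (((hasDerivAt_pow 2 s).const_mul M).div_const 2 |>.sub (h.hasDerivAt_v s)).congr_deriv
    (by push_cast; ring)

lemma convexOn (h : IsBVPSolution φ u v w) (hM : ∀ t ∈ Ioo (0:ℝ) 1, φ t ≤ M) :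
    ConvexOn ℝ (Icc 0 1) (fun s => M * s ^ 2 / 2 - v s) := by
  refine convexOn_of_hasDerivWithinAt2_nonneg (convex_Icc 0 1)
    (fun s _ => (h.hasDerivAt_mul_sq_sub M s).continuousAt.continuousWithinAt)
    (fun s _ => (h.hasDerivAt_mul_sq_sub M s).hasDerivWithinAt)
    (f'' := fun s => M - φ s) (fun s hs => ?_) (fun s hs => ?_) <;> rw [interior_Icc] at hs
  · exact (((hasDerivAt_id s).const_mul M).sub (h.hasDerivAt_w s hs)).hasDerivWithinAt
      |>.congr_deriv (by simp)
  · exact sub_nonneg.2 (hM s hs)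

lemma neg_le_v (h : IsBVPSolution φ u v w) (hM : ∀ t ∈ Ioo (0:ℝ) 1, φ t ≤ M)
    (ht : t ∈ Icc (0:ℝ) 1) : -(M * (t * (1 - t)) / 2) ≤ v t := by
  have := (h.convexOn hM).2 (left_mem_Icc.2 zero_le_one) (right_mem_Icc.2 zero_le_one)
    (sub_nonneg.2 ht.2) ht.1 (sub_add_cancel 1 t)
  simp only [smul_eq_mul, h.v_zero, h.v_one, mul_zero, mul_one, zero_add] at this
  norm_num at this
  nlinarith

lemma abs_v_le_mul (h : IsBVPSolution φ u v w) (hM : ∀ t ∈ Ioo (0:ℝ) 1, |φ t| ≤ M)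
    (ht : t ∈ Icc (0:ℝ) 1) : |v t| ≤ M * (t * (1 - t)) / 2 := by
  have lower := h.neg_le_v (fun s hs => (abs_le.1 (hM s hs)).2) ht
  have upper := h.neg.neg_le_v (fun s hs => neg_le.1 (abs_le.1 (hM s hs)).1) ht
  simp only [Pi.neg_apply] at upper
  exact abs_le.2 ⟨lower, by linarith⟩

lemma abs_v_le (h : IsBVPSolution φ u v w) (hM : ∀ t ∈ Ioo (0:ℝ) 1, |φ t| ≤ M)
    (ht : t ∈ Icc (0:ℝ) 1) : |v t| ≤ M / 8 := by
  have hM0 := nonneg_of_abs_le_on_Ioo hM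
  have := h.abs_v_le_mul hM ht
  nlinarith [mul_nonneg hM0 (sq_nonneg (2 * t - 1))]

lemma abs_u_le (h : IsBVPSolution φ u v w) (hM : ∀ t ∈ Ioo (0:ℝ) 1, |φ t| ≤ M)
    (ht : t ∈ Icc (0:ℝ) 1) : |u t| ≤ M / 12 := by
  have hM0 := nonneg_of_abs_le_on_Ioo hM
  have hB : ∀ s, HasDerivAt (fun s => M * (3 * s ^ 2 - 2 * s ^ 3) / 12)
      (M * (s * (1 - s)) / 2) s := fun s =>
    ((((hasDerivAt_pow 2 s).const_mul 3).sub ((hasDerivAt_pow 3 s).const_mul 2)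
      |>.const_mul M |>.div_const 12)).congr_deriv (by push_cast; ring)
  have := image_norm_le_of_norm_deriv_right_le_deriv_boundary
    (fun s _ => (h.hasDerivAt_u s).continuousAt.continuousWithinAt)
    (fun s _ => (h.hasDerivAt_u s).hasDerivWithinAt) (by simp [h.u_zero]) hB
    (fun s hs => h.abs_v_le_mul hM (Ico_subset_Icc_self hs)) ht
  rw [Real.norm_eq_abs] at this
  have h2t : 0 ≤ 1 + 2 * t := by linarith [ht.1]
  nlinarith [mul_nonneg hM0 (mul_nonneg (sq_nonneg (1 - t)) h2t)]

lemma abs_w_le (h : IsBVPSolution φ u v w) (hM : ∀ t ∈ Ioo (0:ℝ) 1, |φ t| ≤ M)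
    (ht : t ∈ Icc (0:ℝ) 1) : |w t| ≤ M / 2 := by
  have hM0 := nonneg_of_abs_le_on_Ioo hM
  -- Tangents at `t` of `M s²/2 ∓ v s`, evaluated at `0` and `1`: the terms in `v t` cancel.
  have tangent : ∀ {u v w φ : ℝ → ℝ}, IsBVPSolution φ u v w → (∀ s ∈ Ioo (0:ℝ) 1, φ s ≤ M) →
      ∀ y ∈ Icc (0:ℝ) 1, M * t ^ 2 / 2 - v t + (M * t - w t) * (y - t) ≤ M * y ^ 2 / 2 - v y :=
    fun hs hφ y hy =>
      (hs.convexOn hφ).add_mul_sub_le_of_hasDerivAt ht hy (hs.hasDerivAt_mul_sq_sub M t)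
  have hup : ∀ s ∈ Ioo (0:ℝ) 1, φ s ≤ M := fun s hs => (abs_le.1 (hM s hs)).2
  have hlo : ∀ s ∈ Ioo (0:ℝ) 1, (-φ) s ≤ M := fun s hs => neg_le.1 (abs_le.1 (hM s hs)).1
  have h0 : (0:ℝ) ∈ Icc (0:ℝ) 1 := left_mem_Icc.2 zero_le_one
  have h1 : (1:ℝ) ∈ Icc (0:ℝ) 1 := right_mem_Icc.2 zero_le_one
  have up₀ := tangent h hup 0 h0
  have up₁ := tangent h hup 1 h1
  have lo₀ := tangent h.neg hlo 0 h0
  have lo₁ := tangent h.neg hlo 1 h1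
  simp only [Pi.neg_apply, h.v_zero, h.v_one, neg_zero] at up₀ up₁ lo₀ lo₁
  have := mul_nonneg hM0 (mul_nonneg ht.1 (sub_nonneg.2 ht.2))
  exact abs_le.2 ⟨by nlinarith, by nlinarith⟩

lemma v_nonneg (h : IsBVPSolution φ u v w) (hφ : ∀ t ∈ Ioo (0:ℝ) 1, φ t ≤ 0)
    (ht : t ∈ Icc (0:ℝ) 1) : 0 ≤ v t := by
  simpa using h.neg_le_v hφ ht

lemma monotoneOn_u (h : IsBVPSolution φ u v w) (hφ : ∀ t ∈ Ioo (0:ℝ) 1, φ t ≤ 0) :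
    MonotoneOn u (Icc 0 1) :=
  monotoneOn_of_hasDerivWithinAt_nonneg (convex_Icc 0 1)
    (fun s _ => (h.hasDerivAt_u s).continuousAt.continuousWithinAt)
    (fun s _ => (h.hasDerivAt_u s).hasDerivWithinAt)
    (fun _ hs => h.v_nonneg hφ (interior_subset hs))

lemma eqOn (h : IsBVPSolution φ u v w) (h' : IsBVPSolution ψ u' v' w')
    (hφψ : EqOn φ ψ (Ioo 0 1)) : EqOn u u' (Icc 0 1) ∧ EqOn v v' (Icc 0 1) := by
  have h0 : ∀ t ∈ Ioo (0:ℝ) 1, |(φ - ψ) t| ≤ 0 := fun t ht => by simp [hφψ ht]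
  refine ⟨fun t ht => ?_, fun t ht => ?_⟩
  · simpa [sub_eq_zero] using (h.sub h').abs_u_le h0 ht
  · simpa [sub_eq_zero] using (h.sub h').abs_v_le h0 ht

end IsBVPSolution

/-- The constant of integration makes `greenV φ 1 = 0`. -/
noncomputable def greenW (φ : ℝ → ℝ) (t : ℝ) : ℝ :=
  (∫ s in 0..t, φ s) - ∫ s in 0..1, ∫ r in 0..s, φ r

noncomputable def greenV (φ : ℝ → ℝ) (t : ℝ) : ℝ := ∫ s in 0..t, greenW φ s

noncomputable def greenU (φ : ℝ → ℝ) (t : ℝ) : ℝ := ∫ s in 0..t, greenV φ s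

section Green

variable {φ : ℝ → ℝ}

lemma continuous_greenW (hφ : Continuous φ) : Continuous (greenW φ) :=
  (continuous_primitive (μ := volume) (fun _ _ => hφ.intervalIntegrable _ _) 0).sub
    continuous_const

lemma continuous_greenV (hφ : Continuous φ) : Continuous (greenV φ) :=
  continuous_primitive (fun _ _ => (continuous_greenW hφ).intervalIntegrable _ _) 0

lemma continuous_greenU (hφ : Continuous φ) : Continuous (greenU φ) :=
  continuous_primitive (fun _ _ => (continuous_greenV hφ).intervalIntegrable _ _) 0

lemma isBVPSolution_green (hφ : Continuous φ) :
    IsBVPSolution φ (greenU φ) (greenV φ) (greenW φ) where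
  hasDerivAt_u t := ((continuous_greenV hφ).integral_hasStrictDerivAt 0 t).hasDerivAt
  hasDerivAt_v t := ((continuous_greenW hφ).integral_hasStrictDerivAt 0 t).hasDerivAt
  hasDerivAt_w t _ := (hφ.integral_hasStrictDerivAt 0 t).hasDerivAt.sub_const _
  u_zero := integral_same
  v_zero := integral_same
  v_one := by
    have hP := continuous_primitive (μ := volume) (fun _ _ => hφ.intervalIntegrable _ _) 0
    simp only [greenV, greenW]
    rw [integral_sub (hP.intervalIntegrable _ _) intervalIntegrable_const]
    simp

end Green

lemma IsBVPSolution.contDiff {φ u v w : ℝ → ℝ} (h : IsBVPSolution φ u v w)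
    (hw : Continuous w) : ContDiff ℝ 2 u := by
  rw [show (2 : WithTop ℕ∞) = 1 + 1 from rfl, contDiff_succ_iff_deriv, h.deriv_u,
    contDiff_one_iff_deriv, h.deriv_v]
  exact ⟨fun t => (h.hasDerivAt_u t).differentiableAt, by simp,
    fun t => (h.hasDerivAt_v t).differentiableAt, hw⟩

lemma IsSolution.isBVPSolution {y : ℝ → ℝ} (hy : IsSolution y) :
    IsBVPSolution (fun t => -exp (y t) - exp (deriv y t)) y (deriv y) (deriv (deriv y)) where
  hasDerivAt_u t := (hy.1.differentiable (by norm_num) t).hasDerivAt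
  hasDerivAt_v t := (hy.1.differentiable_deriv_two t).hasDerivAt
  hasDerivAt_w := hy.2.1
  u_zero := hy.2.2.1
  v_zero := hy.2.2.2.1
  v_one := hy.2.2.2.2

lemma abs_exp_sub_exp_le {a b m : ℝ} (ha : a ≤ m) (hb : b ≤ m) :
    |exp a - exp b| ≤ exp m * |a - b| := by
  wlog hba : b ≤ a generalizing a b
  · rw [abs_sub_comm, abs_sub_comm a]
    exact this hb ha (le_of_not_ge hba)
  rw [abs_of_nonneg (sub_nonneg.2 (exp_le_exp.2 hba)), abs_of_nonneg (sub_nonneg.2 hba)]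
  calc exp a - exp b = exp a * (1 - exp (b - a)) := by rw [exp_sub]; field_simp
    _ ≤ exp a * (a - b) :=
      mul_le_mul_of_nonneg_left (by linarith [add_one_le_exp (b - a)]) (exp_pos a).le
    _ ≤ exp m * (a - b) := mul_le_mul_of_nonneg_right (exp_le_exp.2 ha) (sub_nonneg.2 hba)

noncomputable def rhs (p : ℝ × ℝ) : ℝ := -exp p.1 - exp p.2

def box : Set (ℝ × ℝ) := Icc 0 0.2250 ×ˢ Icc 0 0.3375

lemma exp_add_exp_le : exp (0.2250 : ℝ) + exp 0.3375 ≤ 2.7 := by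
  have h₁ := exp_bound' (x := 0.2250) (by norm_num) (by norm_num) (n := 3) (by norm_num)
  have h₂ := exp_bound' (x := 0.3375) (by norm_num) (by norm_num) (n := 3) (by norm_num)
  norm_num [Finset.sum_range_succ, Nat.factorial] at h₁ h₂
  linarith

lemma rhs_nonpos (p : ℝ × ℝ) : rhs p ≤ 0 := by
  linarith [exp_pos p.1, exp_pos p.2, show rhs p = -exp p.1 - exp p.2 from rfl]

lemma abs_rhs_le {p : ℝ × ℝ} (hp : p ∈ box) : |rhs p| ≤ 2.7 := by
  rw [abs_of_nonpos (rhs_nonpos p), rhs]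
  linarith [exp_le_exp.2 hp.1.2, exp_le_exp.2 hp.2.2, exp_add_exp_le]

lemma abs_rhs_sub_le {p q : ℝ × ℝ} (hp : p ∈ box) (hq : q ∈ box) :
    |rhs p - rhs q| ≤ 2.7 * dist p q := by
  have h₁ : |p.1 - q.1| ≤ dist p q := by
    rw [Prod.dist_eq, ← Real.dist_eq]
    exact le_max_left _ _
  have h₂ : |p.2 - q.2| ≤ dist p q := by
    rw [Prod.dist_eq, ← Real.dist_eq]
    exact le_max_right _ _
  calc |rhs p - rhs q| = |(exp q.1 - exp p.1) + (exp q.2 - exp p.2)| := by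
        unfold rhs; ring_nf
    _ ≤ |exp p.1 - exp q.1| + |exp p.2 - exp q.2| := by
      rw [abs_sub_comm (exp p.1), abs_sub_comm (exp p.2)]
      exact abs_add_le _ _
    _ ≤ exp 0.2250 * dist p q + exp 0.3375 * dist p q := by
      gcongr
      · exact (abs_exp_sub_exp_le hp.1.2 hq.1.2).trans (by gcongr)
      · exact (abs_exp_sub_exp_le hp.2.2 hq.2.2).trans (by gcongr)
    _ ≤ 2.7 * dist p q := by
      rw [← add_mul]
      exact mul_le_mul_of_nonneg_right exp_add_exp_le dist_nonneg

section Picard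

def boxed : Set C(Icc (0:ℝ) 1, ℝ × ℝ) := {f | ∀ x, f x ∈ box}

lemma isClosed_boxed : IsClosed boxed := by
  simp only [boxed, ofPred_forall]
  exact isClosed_iInter fun x =>
    (isClosed_Icc.prod isClosed_Icc).preimage (continuous_eval_const x)

/-- `t ↦ f(x(t), y(t))` for `(x, y) : [0, 1] → ℝ²`, extended constantly to `ℝ`, where the
Green operator lives. -/
noncomputable def forcing (f : C(Icc (0:ℝ) 1, ℝ × ℝ)) (t : ℝ) : ℝ :=
  rhs (IccExtend zero_le_one f t)

variable {f g : C(Icc (0:ℝ) 1, ℝ × ℝ)}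

lemma continuous_forcing (f : C(Icc (0:ℝ) 1, ℝ × ℝ)) : Continuous (forcing f) := by
  have := f.continuous.Icc_extend' (h := zero_le_one)
  unfold forcing rhs
  fun_prop

lemma forcing_of_mem {t : ℝ} (ht : t ∈ Icc (0:ℝ) 1) : forcing f t = rhs (f ⟨t, ht⟩) := by
  rw [forcing, IccExtend_of_mem]

lemma abs_forcing_sub_le (hf : f ∈ boxed) (hg : g ∈ boxed) (t : ℝ) :
    |forcing f t - forcing g t| ≤ 2.7 * dist f g :=
  (abs_rhs_sub_le (hf _) (hg _)).trans
    (mul_le_mul_of_nonneg_left (ContinuousMap.dist_apply_le_dist _) (by norm_num))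

@[simps]
noncomputable def picard (f : C(Icc (0:ℝ) 1, ℝ × ℝ)) : C(Icc (0:ℝ) 1, ℝ × ℝ) where
  toFun x := (greenU (forcing f) x, greenV (forcing f) x)
  continuous_toFun :=
    ((continuous_greenU (continuous_forcing f)).comp continuous_subtype_val).prodMk
      ((continuous_greenV (continuous_forcing f)).comp continuous_subtype_val)

lemma mapsTo_picard : MapsTo picard boxed boxed := by
  intro f hf x
  have h := isBVPSolution_green (continuous_forcing f)
  have hM : ∀ t ∈ Ioo (0:ℝ) 1, |forcing f t| ≤ 2.7 := fun t _ => abs_rhs_le (hf _)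
  have hneg : ∀ t ∈ Ioo (0:ℝ) 1, forcing f t ≤ 0 := fun t _ => rhs_nonpos _
  refine ⟨⟨?_, ?_⟩, h.v_nonneg hneg x.2, ?_⟩
  · simpa [h.u_zero] using h.monotoneOn_u hneg (left_mem_Icc.2 zero_le_one) x.2 x.2.1
  · show greenU (forcing f) x ≤ 0.2250
    linarith [le_abs_self (greenU (forcing f) x), h.abs_u_le hM x.2]
  · show greenV (forcing f) x ≤ 0.3375
    linarith [le_abs_self (greenV (forcing f) x), h.abs_v_le hM x.2]

lemma dist_picard_le (hf : f ∈ boxed) (hg : g ∈ boxed) :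
    dist (picard f) (picard g) ≤ 27 / 80 * dist f g := by
  have h := (isBVPSolution_green (continuous_forcing f)).sub
    (isBVPSolution_green (continuous_forcing g))
  have hM : ∀ t ∈ Ioo (0:ℝ) 1, |(forcing f - forcing g) t| ≤ 2.7 * dist f g :=
    fun t _ => abs_forcing_sub_le hf hg t
  have hd := dist_nonneg (x := f) (y := g)
  refine (ContinuousMap.dist_le (by positivity)).2 fun x => ?_
  have hu := h.abs_u_le hM x.2
  have hv := h.abs_v_le hM x.2
  simp only [Pi.sub_apply] at hu hv
  rw [Prod.dist_eq, picard_apply, picard_apply, Real.dist_eq, Real.dist_eq]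
  exact max_le (by linarith) (by linarith)

lemma exists_picard_fixedPoint : ∃ f ∈ boxed, picard f = f := by
  have hK : ContractingWith (27 / 80) (mapsTo_picard.restrict picard boxed boxed) := by
    refine ⟨by norm_num, LipschitzWith.of_dist_le_mul fun f g => ?_⟩
    simpa [Subtype.dist_eq] using dist_picard_le f.2 g.2
  obtain ⟨f, hf, hfix, -⟩ := hK.exists_fixedPoint' isClosed_boxed.isComplete mapsTo_picard
    (x := ContinuousMap.const _ 0) (fun _ => ⟨⟨le_rfl, by norm_num⟩, le_rfl, by norm_num⟩)
    (edist_ne_top _ _)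
  exact ⟨f, hf, hfix⟩

lemma eq_of_picard_eq (hf : f ∈ boxed) (hg : g ∈ boxed) (hf' : picard f = f)
    (hg' : picard g = g) : f = g := by
  have := dist_picard_le hf hg
  rw [hf', hg'] at this
  exact dist_le_zero.1 (by linarith [dist_nonneg (x := f) (y := g)])

end Picard

noncomputable def jet (y : ℝ → ℝ) (hy : ContDiff ℝ 1 y) : C(Icc (0:ℝ) 1, ℝ × ℝ) where
  toFun x := (y x, deriv y x)
  continuous_toFun := (hy.continuous.comp continuous_subtype_val).prodMk
    ((hy.continuous_deriv le_rfl).comp continuous_subtype_val)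

lemma picard_jet {y : ℝ → ℝ} (hy : IsSolution y) :
    picard (jet y (hy.1.of_le one_le_two)) = jet y (hy.1.of_le one_le_two) := by
  have hφ : EqOn (forcing (jet y (hy.1.of_le one_le_two)))
      (fun t => -exp (y t) - exp (deriv y t)) (Ioo 0 1) :=
    fun t ht => by rw [forcing_of_mem (Ioo_subset_Icc_self ht)]; rfl
  obtain ⟨hu, hv⟩ := (isBVPSolution_green (continuous_forcing _)).eqOn hy.isBVPSolution hφ
  ext x : 1
  exact Prod.ext (hu x.2) (hv x.2)

lemma isSolution_and_inBounds_of_picard_eq {f : C(Icc (0:ℝ) 1, ℝ × ℝ)} (hf : f ∈ boxed)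
    (hfix : picard f = f) : IsSolution (greenU (forcing f)) ∧ InBounds (greenU (forcing f)) := by
  have h := isBVPSolution_green (continuous_forcing f)
  have hfx : ∀ x, f x = (greenU (forcing f) x, greenV (forcing f) x) :=
    fun x => (DFunLike.congr_fun hfix x).symm
  refine ⟨⟨h.contDiff (continuous_greenW (continuous_forcing f)), fun t ht => ?_, h.u_zero,
    h.deriv_u ▸ h.v_zero, h.deriv_u ▸ h.v_one⟩, fun t ht => ?_⟩
  · rw [h.deriv_u, h.deriv_v]
    exact (h.hasDerivAt_w t ht).congr_deriv
      ((forcing_of_mem (Ioo_subset_Icc_self ht)).trans (congrArg rhs (hfx _)))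
  · have hbox := hf ⟨t, ht⟩
    rw [hfx] at hbox
    rw [h.deriv_u, h.deriv_v]
    exact ⟨hbox.1, hbox.2, (h.abs_w_le (fun s _ => abs_rhs_le (hf _)) ht).trans (by norm_num)⟩

theorem example_9 :
    ∃ u : ℝ → ℝ, (IsSolution u ∧ InBounds u ∧
      (∀ t ∈ Set.Icc (0:ℝ) 1, 0 ≤ u t) ∧ MonotoneOn u (Set.Icc (0:ℝ) 1)) ∧
      ∀ v : ℝ → ℝ, IsSolution v ∧ InBounds v → ∀ t ∈ Set.Icc (0:ℝ) 1, v t = u t := by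
  obtain ⟨f, hf, hfix⟩ := exists_picard_fixedPoint
  obtain ⟨hsol, hbd⟩ := isSolution_and_inBounds_of_picard_eq hf hfix
  refine ⟨greenU (forcing f), ⟨hsol, hbd, fun t ht => (hbd t ht).1.1,
    (isBVPSolution_green (continuous_forcing f)).monotoneOn_u fun _ _ => rhs_nonpos _⟩, ?_⟩
  rintro y ⟨hy, hyb⟩ t ht
  have hjet : jet y (hy.1.of_le one_le_two) = f :=
    eq_of_picard_eq (fun x => ⟨(hyb x x.2).1, (hyb x x.2).2.1⟩) hf (picard_jet hy) hfix
  simpa [jet] using congrArg Prod.fst (DFunLike.congr_fun (hjet.trans hfix.symm) ⟨t, ht⟩)
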